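/- Let X be a countable set, γ a binary relation on X, L ⊆ ℕ a set whose unary language {a^n : n ∈ L} is regular, and φ : L → X a surjection such that {(m,n) ∈ L×L : φ m = φ n} and {(m,n) ∈ L×L : γ (φ m) (φ n)} are regular relations (so (L, φ) is a unary FA-presentation of (X, γ)). Let Q be an equivalence relation on X such that {(m,n) ∈ L×L : Q (φ m) (φ n)} is a regular relation. Then the quotient structure (X/Q, γ_Q), where γ_Q relates the class of x to the class of y if and only if there exist x' with Q x x' and y' with Q y y' such that γ x' y', is unary FA-presentable. -/

import Mathlib

/-- The convolution word of the pair `(m, n)`, over the three-letter alphabet `Fin 3`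
(`0` plays the role of `s`, `1` of `l`, `2` of `r`). -/
def convWord (m n : ℕ) : List (Fin 3) :=
  List.replicate (min m n) 0 ++ List.replicate (m - min m n) 1 ++
    List.replicate (n - min m n) 2

/-- The convolution language of a binary relation on `ℕ`. -/
def convLang (R : ℕ → ℕ → Prop) : Language (Fin 3) :=
  {w | ∃ m n, R m n ∧ w = convWord m n}

/-- A binary relation on `ℕ` is regular if its convolution language is regular. -/
def RegularRel (R : ℕ → ℕ → Prop) : Prop :=
  (convLang R).IsRegular
/-- The unary language over a one-letter alphabet associated to a set `L ⊆ ℕ`,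
identifying `a^n` with `n`. -/
def unaryLang (L : Set ℕ) : Language Unit :=
  {w | w.length ∈ L}

/-- A (countable) structure `(X, ρ)` with one binary relation is unary FA-presentable
if there are a set `L ⊆ ℕ` whose unary language is regular and a surjection
`φ : L → X` such that equality and the relation, pulled back along `φ`, are
regular relations. -/
def UnaryFAPresentable {X : Type*} (ρ : X → X → Prop) : Prop :=
  ∃ L : Set ℕ, (unaryLang L).IsRegular ∧
    ∃ φ : ℕ → X, (∀ x, ∃ n ∈ L, φ n = x) ∧
      RegularRel (fun m n => m ∈ L ∧ n ∈ L ∧ φ m = φ n) ∧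
      RegularRel (fun m n => m ∈ L ∧ n ∈ L ∧ ρ (φ m) (φ n))

/-! A relation on `ℕ` is regular exactly when it is eventually periodic: beyond a threshold `N`,
adding a period `p` to both coordinates, or to the larger one once they are far apart, does not
change membership. One direction holds because the iterates of each letter of a DFA on a finite
state space are eventually periodic; for the other, a DFA reading `s^a l^d` or `s^a r^d` only
needs to remember `a` and `d` up to this periodicity. Eventually periodic relations are closed
under composition, since a witness can be moved along with the coordinates it is close to.
The quotient is presented by the same `L` and `φ` followed by the quotient map: its equality
pulls back to `Q`, and its relation to the composite `Q ∘ γ ∘ Q`. -/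

theorem exists_iterate_add_eq {ι σ : Type*} [Finite ι] [Finite σ] (f : ι → σ → σ) :
    ∃ N p, 0 < p ∧ ∀ i k, N ≤ k → (f i)^[k + p] = (f i)^[k] := by
  obtain ⟨N, j, hNj, hrep⟩ := Set.finite_univ.exists_lt_map_eq_of_forall_mem
    (f := fun k i => (f i)^[k]) fun _ => Set.mem_univ _
  refine ⟨N, j - N, by omega, fun i k hk => ?_⟩
  obtain ⟨t, rfl⟩ := Nat.exists_eq_add_of_le' hk
  rw [show t + N + (j - N) = t + j by omega, Function.iterate_add, Function.iterate_add,
    congrFun hrep i]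

section PeriodRep

variable {N p : ℕ}

/-- The representative of `k` in `[0, N + p)` for the congruence that identifies `k` with
`k + p` once `k ≥ N`. -/
def periodRep (N p k : ℕ) : ℕ := if k < N + p then k else N + (k - N) % p

theorem periodRep_of_lt {k : ℕ} (hk : k < N + p) : periodRep N p k = k := if_pos hk

theorem periodRep_lt (hp : 0 < p) (k : ℕ) : periodRep N p k < N + p := by
  unfold periodRep
  split
  · assumption
  · have := Nat.mod_lt (k - N) hp
    omega

theorem periodRep_add_period {k : ℕ} (hk : N ≤ k) : periodRep N p (k + p) = periodRep N p k := by
  unfold periodRep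
  rw [if_neg (by omega), show k + p - N = k - N + p by omega, Nat.add_mod_right]
  split
  · rw [Nat.mod_eq_of_lt (by omega)]
    omega
  · rfl

theorem apply_periodRep {α : Type*} {f : ℕ → α} (hp : 0 < p)
    (hf : ∀ k, N ≤ k → f (k + p) = f k) (k : ℕ) : f (periodRep N p k) = f k := by
  induction k using Nat.strong_induction_on with
  | _ k ih =>
    by_cases hk : k < N + p
    · rw [periodRep_of_lt hk]
    · obtain ⟨j, rfl⟩ : ∃ j, k = j + p := ⟨k - p, by omega⟩
      have hj : N ≤ j := by omega
      rw [periodRep_add_period hj, ih j (by omega), hf j hj]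

theorem periodRep_periodRep_add_one (hp : 0 < p) (k : ℕ) :
    periodRep N p (periodRep N p k + 1) = periodRep N p (k + 1) :=
  apply_periodRep (f := fun j => periodRep N p (j + 1)) hp
    (fun j hj => by rw [add_right_comm, periodRep_add_period (by omega)]) k

end PeriodRep

section ConvWord

open List

theorem convWord_add_left (a d : ℕ) :
    convWord (a + d) a = replicate a 0 ++ replicate d 1 := by
  simp [convWord]

theorem convWord_add_right (a d : ℕ) :
    convWord a (a + d) = replicate a 0 ++ replicate d 2 := by
  simp [convWord]

theorem convWord_inj {m n m' n' : ℕ} (h : convWord m n = convWord m' n') : m = m' ∧ n = n' := by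
  have h0 := congrArg (count 0) h
  have h1 := congrArg (count 1) h
  have h2 := congrArg (count 2) h
  simp [convWord, count_replicate] at h0 h1 h2
  omega

theorem convWord_mem_convLang {R : ℕ → ℕ → Prop} {m n : ℕ} :
    convWord m n ∈ convLang R ↔ R m n := by
  refine ⟨fun ⟨m', n', hR, h⟩ => ?_, fun hR => ⟨m, n, hR, rfl⟩⟩
  obtain ⟨rfl, rfl⟩ := convWord_inj h
  exact hR

end ConvWord

structure EventuallyPeriodicRel (R : ℕ → ℕ → Prop) (N p : ℕ) : Prop where
  add_both : ∀ m n, N ≤ m → N ≤ n → (R (m + p) (n + p) ↔ R m n)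
  add_left : ∀ m n, n + N ≤ m → (R (m + p) n ↔ R m n)
  add_right : ∀ m n, m + N ≤ n → (R m (n + p) ↔ R m n)

namespace EventuallyPeriodicRel

variable {R : ℕ → ℕ → Prop} {N p : ℕ}

theorem mono (h : EventuallyPeriodicRel R N p) {N' : ℕ} (hN : N ≤ N') :
    EventuallyPeriodicRel R N' p :=
  ⟨fun m n hm hn => h.add_both m n (by omega) (by omega),
    fun m n hmn => h.add_left m n (by omega), fun m n hmn => h.add_right m n (by omega)⟩

theorem nat_mul (h : EventuallyPeriodicRel R N p) : ∀ t, EventuallyPeriodicRel R N (t * p)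
  | 0 => ⟨by simp, by simp, by simp⟩
  | t + 1 => by
    have ih := h.nat_mul t
    rw [add_one_mul]
    refine ⟨fun m n hm hn => ?_, fun m n hmn => ?_, fun m n hmn => ?_⟩ <;> rw [← add_assoc]
    · rw [← add_assoc, h.add_both _ _ (by omega) (by omega), ih.add_both m n hm hn]
    · rw [h.add_left _ _ (by omega), ih.add_left m n hmn]
    · rw [h.add_right _ _ (by omega), ih.add_right m n hmn]

/-- A witness `k` of the composition either stays where it is or moves by `p` together with
the coordinates it is close to; the threshold leaves room for both choices. -/
theorem comp {A B : ℕ → ℕ → Prop} (hA : EventuallyPeriodicRel A N p)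
    (hB : EventuallyPeriodicRel B N p) :
    EventuallyPeriodicRel (fun m n => ∃ k, A m k ∧ B k n) (2 * N + 2 * p + 2) p := by
  refine ⟨fun m n hm hn => ⟨?_, ?_⟩, fun m n hmn => ⟨?_, ?_⟩, fun m n hmn => ⟨?_, ?_⟩⟩
  · rintro ⟨k, ha, hb⟩
    by_cases hk : N + p ≤ k
    · obtain ⟨k, rfl⟩ : ∃ k', k = k' + p := ⟨k - p, by omega⟩
      exact ⟨k, (hA.add_both m k (by omega) (by omega)).mp ha,
        (hB.add_both k n (by omega) (by omega)).mp hb⟩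
    · exact ⟨k, (hA.add_left m k (by omega)).mp ha, (hB.add_right k n (by omega)).mp hb⟩
  · rintro ⟨k, ha, hb⟩
    by_cases hk : N ≤ k
    · exact ⟨k + p, (hA.add_both m k (by omega) hk).mpr ha, (hB.add_both k n hk (by omega)).mpr hb⟩
    · exact ⟨k, (hA.add_left m k (by omega)).mpr ha, (hB.add_right k n (by omega)).mpr hb⟩
  · rintro ⟨k, ha, hb⟩
    by_cases hk : k ≤ n + N + p
    · exact ⟨k, (hA.add_left m k (by omega)).mp ha, hb⟩
    · obtain ⟨k, rfl⟩ : ∃ k', k = k' + p := ⟨k - p, by omega⟩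
      exact ⟨k, (hA.add_both m k (by omega) (by omega)).mp ha, (hB.add_left k n (by omega)).mp hb⟩
  · rintro ⟨k, ha, hb⟩
    by_cases hk : k ≤ n + N + p
    · exact ⟨k, (hA.add_left m k (by omega)).mpr ha, hb⟩
    · exact ⟨k + p, (hA.add_both m k (by omega) (by omega)).mpr ha,
        (hB.add_left k n (by omega)).mpr hb⟩
  · rintro ⟨k, ha, hb⟩
    by_cases hk : k ≤ m + N + p
    · exact ⟨k, ha, (hB.add_right k n (by omega)).mp hb⟩
    · obtain ⟨k, rfl⟩ : ∃ k', k = k' + p := ⟨k - p, by omega⟩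
      exact ⟨k, (hA.add_right m k (by omega)).mp ha, (hB.add_both k n (by omega) (by omega)).mp hb⟩
  · rintro ⟨k, ha, hb⟩
    by_cases hk : k ≤ m + N + p
    · exact ⟨k, ha, (hB.add_right k n (by omega)).mpr hb⟩
    · exact ⟨k + p, (hA.add_right m k (by omega)).mpr ha,
        (hB.add_both k n (by omega) (by omega)).mpr hb⟩

end EventuallyPeriodicRel

theorem DFA.evalFrom_replicate {α σ : Type*} (M : DFA α σ) (s : σ) (c : α) (k : ℕ) :
    M.evalFrom s (List.replicate k c) = (M.step · c)^[k] s := by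
  induction k generalizing s with
  | zero => rfl
  | succ k ih => exact ih (M.step s c)

theorem RegularRel.exists_eventuallyPeriodicRel {R : ℕ → ℕ → Prop} (h : RegularRel R) :
    ∃ N p, 0 < p ∧ EventuallyPeriodicRel R N p := by
  obtain ⟨σ, _, M, hM⟩ := h
  obtain ⟨N, p, hp, hper⟩ := exists_iterate_add_eq fun (c : Fin 3) t => M.step t c
  have hR : ∀ m n, R m n ↔ (M.step · 2)^[n - min m n]
      ((M.step · 1)^[m - min m n] ((M.step · 0)^[min m n] M.start)) ∈ M.accept := by
    intro m n
    rw [← convWord_mem_convLang (R := R), ← hM, DFA.mem_accepts, convWord, DFA.eval,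
      DFA.evalFrom_of_append, DFA.evalFrom_of_append, DFA.evalFrom_replicate,
      DFA.evalFrom_replicate, DFA.evalFrom_replicate]
  refine ⟨N, p, hp, fun m n hm hn => ?_, fun m n hmn => ?_, fun m n hmn => ?_⟩ <;>
    rw [hR, hR]
  · rw [show min (m + p) (n + p) = min m n + p by omega, hper 0 _ (by omega),
      show m + p - (min m n + p) = m - min m n by omega,
      show n + p - (min m n + p) = n - min m n by omega]
  · rw [show min (m + p) n = min m n by omega, show m + p - min m n = m - min m n + p by omega,
      hper 1 _ (by omega)]
  · rw [show min m (n + p) = min m n by omega, show n + p - min m n = n - min m n + p by omega,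
      hper 2 _ (by omega)]

theorem EventuallyPeriodicRel.periodRep_add_left_iff {R : ℕ → ℕ → Prop} {N p : ℕ}
    (h : EventuallyPeriodicRel R N p) (hp : 0 < p) (a d : ℕ) :
    R (periodRep N p a + periodRep N p d) (periodRep N p a) ↔ R (a + d) a := by
  have hd := apply_periodRep (N := N) (f := fun d => R (periodRep N p a + d) (periodRep N p a)) hp
    (fun k hk => propext <| by rw [← add_assoc]; exact h.add_left _ _ (by omega)) d
  have ha := apply_periodRep (N := N) (f := fun a => R (a + d) a) hp
    (fun k hk => propext <| by rw [add_right_comm]; exact h.add_both _ _ (by omega) hk) a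
  exact (Iff.of_eq hd).trans (Iff.of_eq ha)

theorem EventuallyPeriodicRel.periodRep_add_right_iff {R : ℕ → ℕ → Prop} {N p : ℕ}
    (h : EventuallyPeriodicRel R N p) (hp : 0 < p) (a d : ℕ) :
    R (periodRep N p a) (periodRep N p a + periodRep N p d) ↔ R a (a + d) := by
  have hd := apply_periodRep (N := N) (f := fun d => R (periodRep N p a) (periodRep N p a + d)) hp
    (fun k hk => propext <| by rw [← add_assoc]; exact h.add_right _ _ (by omega)) d
  have ha := apply_periodRep (N := N) (f := fun a => R a (a + d)) hp
    (fun k hk => propext <| by rw [add_right_comm]; exact h.add_both _ _ hk (by omega)) a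
  exact (Iff.of_eq hd).trans (Iff.of_eq ha)

section PeriodicDFA

open List

variable {R : ℕ → ℕ → Prop} (N : ℕ) {p : ℕ} (hp : 0 < p)

def periodRepFin (k : ℕ) : Fin (N + p) := ⟨periodRep N p k, periodRep_lt hp k⟩

theorem periodRepFin_add_one (k : ℕ) :
    periodRepFin N hp (periodRepFin N hp k + 1) = periodRepFin N hp (k + 1) :=
  Fin.ext (periodRep_periodRep_add_one hp k)

variable (R) in
/-- After reading `0^a e^d` with `e ≠ 0`, the state is `(a, e, d)` up to `periodRep`, with
`e` replaced by `0` when `d = 0`; every other word leads to the dead state `none`. -/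
def periodicDFA : DFA (Fin 3) (Option (Fin (N + p) × Fin 3 × Fin (N + p))) where
  step s c := s.bind fun (a, e, d) =>
    if c = 0 ∧ e = 0 then some (periodRepFin N hp (a + 1), 0, d)
    else if e = 0 ∨ e = c then some (a, c, periodRepFin N hp (d + 1)) else none
  start := some (periodRepFin N hp 0, 0, periodRepFin N hp 0)
  accept := {s | ∃ a e d, s = some (a, e, d) ∧ if e = 2 then R a (a + d) else R (a + d) a}

theorem periodicDFA_eval_replicate_zero (a : ℕ) :
    (periodicDFA R N hp).eval (replicate a 0) =
      some (periodRepFin N hp a, 0, periodRepFin N hp 0) := by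
  induction a with
  | zero => rfl
  | succ a ih =>
    rw [replicate_succ', DFA.eval_append_singleton, ih]
    simp [periodicDFA, periodRepFin_add_one]

theorem periodicDFA_eval_blocks (a d : ℕ) {e : Fin 3} (he : e ≠ 0) :
    (periodicDFA R N hp).eval (replicate a 0 ++ replicate d e) =
      some (periodRepFin N hp a, if d = 0 then 0 else e, periodRepFin N hp d) := by
  induction d with
  | zero => simpa using periodicDFA_eval_replicate_zero N hp a
  | succ d ih =>
    rw [replicate_succ', ← append_assoc, DFA.eval_append_singleton, ih]
    split_ifs <;> simp_all [periodicDFA, periodRepFin_add_one]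

theorem exists_blocks_of_periodicDFA_eval_ne_none {w : List (Fin 3)}
    (hw : (periodicDFA R N hp).eval w ≠ none) :
    ∃ a e d, e ≠ 0 ∧ w = replicate a 0 ++ replicate d e := by
  induction w using List.reverseRecOn with
  | nil => exact ⟨0, 1, 0, by decide, rfl⟩
  | append_singleton w c ih =>
    rw [DFA.eval_append_singleton] at hw
    obtain ⟨a, e, d, he, rfl⟩ := ih fun h => hw (by rw [h]; rfl)
    rw [periodicDFA_eval_blocks N hp a d he] at hw
    rcases Nat.eq_zero_or_pos d with rfl | hd
    · by_cases hc : c = 0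
      · exact ⟨a + 1, e, 0, he, by simp [hc, replicate_succ']⟩
      · exact ⟨a, c, 1, hc, by simp⟩
    · have hce : c = e := by
        by_contra hce
        simp [periodicDFA, hd.ne', he, Ne.symm hce] at hw
      exact ⟨a, e, d + 1, he, by rw [hce, replicate_succ', append_assoc]⟩

end PeriodicDFA

theorem periodicDFA_accepts {R : ℕ → ℕ → Prop} {N p : ℕ} (h : EventuallyPeriodicRel R N p)
    (hp : 0 < p) : (periodicDFA R N hp).accepts = convLang R := by
  have hleft (a d : ℕ) : convWord (a + d) a ∈ (periodicDFA R N hp).accepts ↔ R (a + d) a := by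
    rw [convWord_add_left, DFA.mem_accepts, periodicDFA_eval_blocks N hp a d one_ne_zero,
      ← h.periodRep_add_left_iff hp]
    split_ifs <;> simp [periodicDFA, periodRepFin]
  have hright (a d : ℕ) : convWord a (a + d) ∈ (periodicDFA R N hp).accepts ↔ R a (a + d) := by
    rw [convWord_add_right, DFA.mem_accepts, periodicDFA_eval_blocks N hp a d (by decide),
      ← h.periodRep_add_right_iff hp]
    rcases Nat.eq_zero_or_pos d with rfl | hd
    · simp [periodicDFA, periodRepFin, periodRep_of_lt (show 0 < N + p by omega)]
    · simp [periodicDFA, periodRepFin, hd.ne']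
  ext w
  constructor
  · intro hw
    have hlive : (periodicDFA R N hp).eval w ≠ none := by
      obtain ⟨a, e, d, hs, -⟩ := hw
      rw [DFA.eval, hs]
      exact Option.some_ne_none _
    obtain ⟨a, e, d, he, rfl⟩ := exists_blocks_of_periodicDFA_eval_ne_none N hp hlive
    rcases (by decide : ∀ e : Fin 3, e ≠ 0 → e = 1 ∨ e = 2) e he with rfl | rfl
    · rw [← convWord_add_left] at hw ⊢
      exact convWord_mem_convLang.mpr ((hleft a d).mp hw)
    · rw [← convWord_add_right] at hw ⊢
      exact convWord_mem_convLang.mpr ((hright a d).mp hw)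
  · rintro ⟨m, n, hR, rfl⟩
    rcases le_total n m with hnm | hmn
    · obtain ⟨d, rfl⟩ := Nat.exists_eq_add_of_le hnm
      exact (hleft n d).mpr hR
    · obtain ⟨d, rfl⟩ := Nat.exists_eq_add_of_le hmn
      exact (hright m d).mpr hR

theorem regularRel_iff {R : ℕ → ℕ → Prop} :
    RegularRel R ↔ ∃ N p, 0 < p ∧ EventuallyPeriodicRel R N p :=
  ⟨RegularRel.exists_eventuallyPeriodicRel,
    fun ⟨N, _, hp, h⟩ => ⟨_, inferInstance, periodicDFA R N hp, periodicDFA_accepts h hp⟩⟩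

theorem RegularRel.comp {A B : ℕ → ℕ → Prop} (hA : RegularRel A) (hB : RegularRel B) :
    RegularRel (fun m n => ∃ k, A m k ∧ B k n) := by
  obtain ⟨NA, pA, hpA, hA⟩ := regularRel_iff.mp hA
  obtain ⟨NB, pB, hpB, hB⟩ := regularRel_iff.mp hB
  have hA' := (hA.nat_mul pB).mono (le_max_left NA NB)
  have hB' := (hB.nat_mul pA).mono (le_max_right NA NB)
  rw [mul_comm] at hB'
  exact regularRel_iff.mpr ⟨_, _, Nat.mul_pos hpB hpA, hA'.comp hB'⟩

theorem stmt6_general {X : Type*} (γ : X → X → Prop)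
    (L : Set ℕ) (hL : (unaryLang L).IsRegular)
    (φ : ℕ → X) (hsurj : ∀ x, ∃ n ∈ L, φ n = x)
    (hγ : RegularRel (fun m n => m ∈ L ∧ n ∈ L ∧ γ (φ m) (φ n)))
    (Q : X → X → Prop) (hQ : Equivalence Q)
    (hQreg : RegularRel (fun m n => m ∈ L ∧ n ∈ L ∧ Q (φ m) (φ n))) :
    UnaryFAPresentable (fun a b : Quotient (⟨Q, hQ⟩ : Setoid X) =>
      ∃ x y : X, Quotient.mk (⟨Q, hQ⟩ : Setoid X) x = a ∧
        Quotient.mk (⟨Q, hQ⟩ : Setoid X) y = b ∧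
        ∃ x' y' : X, Q x x' ∧ Q y y' ∧ γ x' y') := by
  let s : Setoid X := ⟨Q, hQ⟩
  refine ⟨L, hL, fun n => Quotient.mk s (φ n), fun a => ?_, ?_, ?_⟩
  · obtain ⟨x, rfl⟩ := Quotient.exists_rep a
    obtain ⟨n, hn, rfl⟩ := hsurj x
    exact ⟨n, hn, rfl⟩
  · convert hQreg using 6
    exact Quotient.eq
  · convert hQreg.comp (hγ.comp hQreg) using 3 with m n
    constructor
    · rintro ⟨hm, hn, x, y, hx, hy, x', y', hxx', hyy', hγxy⟩
      obtain ⟨k, hk, rfl⟩ := hsurj x'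
      obtain ⟨k', hk', rfl⟩ := hsurj y'
      exact ⟨k, ⟨hm, hk, hQ.trans (Quotient.exact hx.symm) hxx'⟩, k', ⟨hk, hk', hγxy⟩,
        hk', hn, hQ.trans (hQ.symm hyy') (Quotient.exact hy)⟩
    · rintro ⟨k, ⟨hm, hk, hmk⟩, k', ⟨-, hk', hγkk'⟩, -, hn, hk'n⟩
      exact ⟨hm, hn, φ m, φ n, rfl, rfl, φ k, φ k', hmk, hQ.symm hk'n, hγkk'⟩

theorem stmt6 {X : Type*} [Countable X] (γ : X → X → Prop)
    (L : Set ℕ) (hL : (unaryLang L).IsRegular)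
    (φ : ℕ → X) (hsurj : ∀ x, ∃ n ∈ L, φ n = x)
    (heq : RegularRel (fun m n => m ∈ L ∧ n ∈ L ∧ φ m = φ n))
    (hγ : RegularRel (fun m n => m ∈ L ∧ n ∈ L ∧ γ (φ m) (φ n)))
    (Q : X → X → Prop) (hQ : Equivalence Q)
    (hQreg : RegularRel (fun m n => m ∈ L ∧ n ∈ L ∧ Q (φ m) (φ n))) :
    UnaryFAPresentable (fun a b : Quotient (⟨Q, hQ⟩ : Setoid X) =>
      ∃ x y : X, Quotient.mk (⟨Q, hQ⟩ : Setoid X) x = a ∧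
        Quotient.mk (⟨Q, hQ⟩ : Setoid X) y = b ∧
        ∃ x' y' : X, Q x x' ∧ Q y y' ∧ γ x' y') :=
  stmt6_general γ L hL φ hsurj hγ Q hQ hQreg
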